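/- Let 𝒜 be an abelian category and A a subring of ℚ. A morphism f : X → Y of 𝒜 is an A-isogeny if and only if both the kernel of f and the cokernel of f are A-torsion objects. Moreover, the A-torsion objects of 𝒜 form a Serre subcategory: in any short exact sequence 0 → X' → X → X'' → 0, the object X is A-torsion if and only if both X' and X'' are A-torsion. -/
import Mathlib


open CategoryTheory Limits

/-- An object `X` is `A`-torsion if `n • 𝟙 X = 0` for some nonzero integer `n`
invertible in `A`. -/
def IsATorsion (A : Subring ℚ) {C : Type*} [Category C] [Preadditive C] (X : C) : Prop :=
  ∃ n : ℤ, n ≠ 0 ∧ IsUnit (n : A) ∧ (n : ℤ) • 𝟙 X = 0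

/-- `f : X ⟶ Y` is an `A`-isogeny if there are `g : Y ⟶ X` and a nonzero integer `n`
invertible in `A` with `f ≫ g = n • 𝟙 X` and `g ≫ f = n • 𝟙 Y`. -/
def IsAIsogeny (A : Subring ℚ) {C : Type*} [Category C] [Preadditive C]
    {X Y : C} (f : X ⟶ Y) : Prop :=
  ∃ (g : Y ⟶ X) (n : ℤ), n ≠ 0 ∧ IsUnit (n : A) ∧
    f ≫ g = (n : ℤ) • 𝟙 X ∧ g ≫ f = (n : ℤ) • 𝟙 Y

section Aux

variable (A : Subring ℚ) {C : Type*} [Category C] [Preadditive C]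

lemma isUnit_int_mul {n m : ℤ} (hn : IsUnit ((n : ℤ) : A)) (hm : IsUnit ((m : ℤ) : A)) :
    IsUnit (((n * m : ℤ)) : A) := by
  push_cast
  exact hn.mul hm

lemma torsion_of_mono {X Y : C} (i : X ⟶ Y) [Mono i] (h : IsATorsion A Y) :
    IsATorsion A X := by
  obtain ⟨n, hn0, hu, hn⟩ := h
  refine ⟨n, hn0, hu, ?_⟩
  rw [← cancel_mono i, zero_comp, Preadditive.zsmul_comp, Category.id_comp,
    ← Category.comp_id i, ← Preadditive.comp_zsmul, hn, comp_zero]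

lemma torsion_of_epi {X Y : C} (p : X ⟶ Y) [Epi p] (h : IsATorsion A X) :
    IsATorsion A Y := by
  obtain ⟨n, hn0, hu, hn⟩ := h
  refine ⟨n, hn0, hu, ?_⟩
  rw [← cancel_epi p, comp_zero, Preadditive.comp_zsmul, Category.comp_id,
    ← Category.id_comp p, ← Preadditive.zsmul_comp, hn, zero_comp]

end Aux

/-- Proposition B.3.1 a) and d): in an abelian category, `f` is an `A`-isogeny iff its
kernel and cokernel are `A`-torsion; and the `A`-torsion objects form a Serre subcategory:
in a short exact sequence the middle object is `A`-torsion iff the two outer ones are. -/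
theorem stmt_5 (A : Subring ℚ) {C : Type*} [Category C] [Abelian C] :
    (∀ (X Y : C) (f : X ⟶ Y),
        IsAIsogeny A f ↔ (IsATorsion A (kernel f) ∧ IsATorsion A (cokernel f))) ∧
    (∀ (S : ShortComplex C), S.ShortExact →
        (IsATorsion A S.X₂ ↔ (IsATorsion A S.X₁ ∧ IsATorsion A S.X₃))) := by
  constructor
  · intro X Y f
    constructor
    · rintro ⟨g, n, hn0, hu, h1, h2⟩
      constructor
      · refine ⟨n, hn0, hu, ?_⟩
        rw [← cancel_mono (kernel.ι f), zero_comp, Preadditive.zsmul_comp,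
          Category.id_comp]
        have : kernel.ι f ≫ (n • 𝟙 X) = n • kernel.ι f := by
          rw [Preadditive.comp_zsmul, Category.comp_id]
        rw [show (n : ℤ) • kernel.ι f = kernel.ι f ≫ (n • 𝟙 X) by
          rw [Preadditive.comp_zsmul, Category.comp_id], ← h1,
          ← Category.assoc, kernel.condition, zero_comp]
      · refine ⟨n, hn0, hu, ?_⟩
        rw [← cancel_epi (cokernel.π f), comp_zero, Preadditive.comp_zsmul,
          Category.comp_id]
        rw [show (n : ℤ) • cokernel.π f = (n • 𝟙 Y) ≫ cokernel.π f by
          rw [Preadditive.zsmul_comp, Category.id_comp], ← h2,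
          Category.assoc, cokernel.condition, comp_zero]
    · rintro ⟨⟨n, hn0, hnu, hn⟩, ⟨m, hm0, hmu, hm⟩⟩
      -- build the quasi-inverse through the image
      have hker : kernel.ι f ≫ ((n : ℤ) • 𝟙 X) = 0 := by
        rw [Preadditive.comp_zsmul, Category.comp_id,
          show (n : ℤ) • kernel.ι f = ((n : ℤ) • 𝟙 (kernel f)) ≫ kernel.ι f by
            rw [Preadditive.zsmul_comp, Category.id_comp], hn, zero_comp]
      have hcoker : ((m : ℤ) • 𝟙 Y) ≫ cokernel.π f = 0 := by
        rw [Preadditive.zsmul_comp, Category.id_comp,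
          show (m : ℤ) • cokernel.π f = cokernel.π f ≫ ((m : ℤ) • 𝟙 (cokernel f)) by
            rw [Preadditive.comp_zsmul, Category.comp_id], hm, comp_zero]
      -- w : coimage f ⟶ X
      let w : Abelian.coimage f ⟶ X := cokernel.desc _ ((n : ℤ) • 𝟙 X) hker
      have hw : Abelian.coimage.π f ≫ w = (n : ℤ) • 𝟙 X := cokernel.π_desc _ _ _
      -- v : Y ⟶ image f
      let v : Y ⟶ Abelian.image f := kernel.lift _ ((m : ℤ) • 𝟙 Y) hcoker
      have hv : v ≫ Abelian.image.ι f = (m : ℤ) • 𝟙 Y := kernel.lift_ι _ _ _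
      -- factorization f = e ≫ ι'
      let e : X ⟶ Abelian.image f := Abelian.factorThruImage f
      have hfac : e ≫ Abelian.image.ι f = f := Abelian.image.fac f
      have hcomp : Abelian.coimage.π f ≫ Abelian.coimageImageComparison f = e := by
        rw [← cancel_mono (Abelian.image.ι f), Category.assoc,
          Abelian.coimage_image_factorisation, hfac]
      let u : Abelian.image f ⟶ X := inv (Abelian.coimageImageComparison f) ≫ w
      have hu : e ≫ u = (n : ℤ) • 𝟙 X := by
        rw [← hcomp]
        simp only [u, Category.assoc, IsIso.hom_inv_id_assoc, hw]
      refine ⟨v ≫ u, n * m, mul_ne_zero hn0 hm0, isUnit_int_mul A hnu hmu, ?_, ?_⟩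
      · -- f ≫ v ≫ u
        have hiv : Abelian.image.ι f ≫ v = (m : ℤ) • 𝟙 (Abelian.image f) := by
          rw [← cancel_mono (Abelian.image.ι f), Category.assoc, hv,
            Preadditive.zsmul_comp, Category.id_comp, Preadditive.comp_zsmul,
            Category.comp_id]
        calc f ≫ v ≫ u = e ≫ (Abelian.image.ι f ≫ v) ≫ u := by
              simp only [← Category.assoc]; rw [hfac]
          _ = (m : ℤ) • (e ≫ u) := by
              rw [hiv]
              simp only [Preadditive.zsmul_comp, Preadditive.comp_zsmul,
                Category.id_comp]
          _ = (n * m : ℤ) • 𝟙 X := by rw [hu, smul_smul, mul_comm]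
      · -- (v ≫ u) ≫ f
        have hue : u ≫ e = (n : ℤ) • 𝟙 (Abelian.image f) := by
          rw [← cancel_epi e, ← Category.assoc, hu, Preadditive.zsmul_comp,
            Category.id_comp, Preadditive.comp_zsmul, Category.comp_id]
        calc (v ≫ u) ≫ f = v ≫ (u ≫ e) ≫ Abelian.image.ι f := by
              simp only [Category.assoc]; rw [hfac]
          _ = (n : ℤ) • (v ≫ Abelian.image.ι f) := by
              rw [hue]
              simp only [Preadditive.zsmul_comp, Preadditive.comp_zsmul,
                Category.id_comp]
          _ = (n * m : ℤ) • 𝟙 Y := by rw [hv, smul_smul]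
  · intro S hS
    have := hS.mono_f
    have := hS.epi_g
    constructor
    · intro h
      exact ⟨torsion_of_mono A S.f h, torsion_of_epi A S.g h⟩
    · rintro ⟨⟨n, hn0, hnu, hn⟩, ⟨m, hm0, hmu, hm⟩⟩
      refine ⟨n * m, mul_ne_zero hn0 hm0, isUnit_int_mul A hnu hmu, ?_⟩
      have hw : ((m : ℤ) • 𝟙 S.X₂) ≫ S.g = 0 := by
        rw [Preadditive.zsmul_comp, Category.id_comp,
          show (m : ℤ) • S.g = S.g ≫ ((m : ℤ) • 𝟙 S.X₃) by
            rw [Preadditive.comp_zsmul, Category.comp_id], hm, comp_zero]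
      obtain ⟨l, hl⟩ := KernelFork.IsLimit.lift' hS.exact.fIsKernel
        ((m : ℤ) • 𝟙 S.X₂) hw
      have hl' : l ≫ S.f = (m : ℤ) • 𝟙 S.X₂ := hl
      have : ((n * m : ℤ)) • 𝟙 S.X₂ = l ≫ (((n : ℤ)) • S.f) := by
        rw [Preadditive.comp_zsmul, hl', smul_smul]
      rw [this, show (n : ℤ) • S.f = ((n : ℤ) • 𝟙 S.X₁) ≫ S.f by
        rw [Preadditive.zsmul_comp, Category.id_comp], hn, zero_comp, comp_zero]
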